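/- Let $k \in \mathbb{N}$ be odd and $h \in \mathbb{Z}$ even with $\gcd(h,k)=1$. Then the Hardy sum $s_1(h,k) = \sum_{a=0}^{k-1} (-1)^{\lfloor ah/k \rfloor} ((a/k))$ satisfies $s_1(h,k) = \frac{1}{2k} \sum_{a=1}^{k-1} \tan(\pi a/k) \cot(\pi a h/k)$. -/
import Mathlib


open scoped Classical

/-- The sawtooth function `((x))`. -/
noncomputable def saw (x : ℝ) : ℝ :=
  if ∃ m : ℤ, x = m then 0 else Int.fract x - 1 / 2

/-- The cotangent function. -/
noncomputable def cot (x : ℝ) : ℝ := Real.cos x / Real.sin x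

section HardyAux
open Finset

-- basic algebraic identities by induction
lemma aux_alt_geom (x : ℂ) (n : ℕ) :
    (x + 1) * ∑ j ∈ range n, (-1 : ℂ) ^ j * x ^ j = 1 - (-1 : ℂ) ^ n * x ^ n := by
  induction n with
  | zero => simp
  | succ n ih =>
    rw [sum_range_succ, mul_add]
    rw [ih]; ring

lemma aux_jgeom (x : ℂ) (n : ℕ) :
    (x - 1) * ∑ j ∈ range n, (j : ℂ) * x ^ j
      = ((n : ℂ) - 1) * x ^ n - ∑ j ∈ range n, x ^ j + 1 := by
  induction n with
  | zero => simp
  | succ n ih =>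
    rw [sum_range_succ, mul_add, ih, sum_range_succ]
    push_cast; ring

section
variable (k : ℕ) (hk : 0 < k)

noncomputable def zt : ℂ := Complex.exp (2 * Real.pi * Complex.I / k)

lemma zt_prim (hk : 0 < k) : IsPrimitiveRoot (zt k) k := by
  exact Complex.isPrimitiveRoot_exp k hk.ne'

lemma zt_zpow_eq_one_iff (hk : 0 < k) (m : ℤ) : zt k ^ m = 1 ↔ (k : ℤ) ∣ m :=
  (zt_prim k hk).zpow_eq_one_iff_dvd m

lemma zt_pow_k (hk : 0 < k) : zt k ^ (k : ℤ) = 1 :=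
  (zt_zpow_eq_one_iff k hk _).mpr dvd_rfl

lemma orth (hk : 0 < k) (m : ℤ) :
    ∑ a ∈ range k, (zt k ^ m) ^ a = if (k : ℤ) ∣ m then (k : ℂ) else 0 := by
  by_cases hd : (k : ℤ) ∣ m
  · simp [ (zt_zpow_eq_one_iff k hk m).mpr hd, hd]
  · rw [if_neg hd]
    have hne : zt k ^ m ≠ 1 := fun hh => hd ((zt_zpow_eq_one_iff k hk m).mp hh)
    rw [geom_sum_eq hne]
    have : (zt k ^ m) ^ k = 1 := by
      rw [← zpow_natCast, ← zpow_mul, mul_comm, zpow_mul, zt_pow_k k hk, one_zpow]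
    rw [this]
    simp

end

section
variable {k : ℕ}

lemma range_eq_insert (hk : 0 < k) : range k = insert 0 (Icc 1 (k - 1)) := by
  ext j
  simp only [mem_range, mem_insert, mem_Icc]
  omega

lemma A_mul (hk : 0 < k) (hko : Odd k) (u : ℂ) (hu : u ^ k = 1) :
    (u + 1) * (-∑ j ∈ Icc 1 (k - 1), (-1 : ℂ) ^ j * u ^ j) = u - 1 := by
  have h1 := aux_alt_geom u k
  rw [range_eq_insert hk, sum_insert (by simp), hu, hko.neg_one_pow] at h1
  simp only [pow_zero, one_mul, mul_add] at h1
  -- h1 : (u+1)*1 + (u+1)*∑ = 1 + 1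
  linear_combination -h1

lemma B_mul (hk : 0 < k) (v : ℂ) (hv : v ^ k = 1) (hv1 : v ≠ 1) :
    (v - 1) * (1 + (2 / (k : ℂ)) * ∑ l ∈ range k, (l : ℂ) * v ^ l) = v + 1 := by
  have hg : ∑ l ∈ range k, v ^ l = 0 := by
    rw [geom_sum_eq hv1, hv]; simp
  have h1 := aux_jgeom v k
  rw [hv, hg] at h1
  have hkc : (k : ℂ) ≠ 0 := Nat.cast_ne_zero.mpr hk.ne'
  field_simp
  linear_combination 2 * h1

end

lemma frac_eq {k : ℕ} (hk : 0 < k) (hko : Odd k) (u v : ℂ) (hu : u ^ k = 1) (hv : v ^ k = 1)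
    (hun : u ≠ -1) (hv1 : v ≠ 1) :
    (u - 1) * (v + 1) / ((u + 1) * (v - 1))
      = (-∑ j ∈ Icc 1 (k - 1), (-1 : ℂ) ^ j * u ^ j)
          * (1 + (2 / (k : ℂ)) * ∑ l ∈ range k, (l : ℂ) * v ^ l) := by
  have h1 := A_mul hk hko u hu
  have h2 := B_mul hk v hv hv1
  have hu1 : u + 1 ≠ 0 := fun hh => hun (by linear_combination hh)
  have hv1' : v - 1 ≠ 0 := sub_ne_zero.mpr hv1
  rw [← h1, ← h2]
  field_simp

lemma trig_eq (θ φ : ℝ) (u v w x : ℂ) (hw : w = Complex.exp (θ * Complex.I))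
    (hx : x = Complex.exp (φ * Complex.I)) (hu : u = w ^ 2) (hv : v = x ^ 2)
    (hun : u ≠ -1) (hv1 : v ≠ 1) :
    ((Real.tan θ * _root_.cot φ : ℝ) : ℂ) = (u - 1) * (v + 1) / ((u + 1) * (v - 1)) := by
  have hw0 : w ≠ 0 := hw ▸ Complex.exp_ne_zero _
  have hx0 : x ≠ 0 := hx ▸ Complex.exp_ne_zero _
  have hwneg : Complex.exp (-(θ : ℂ) * Complex.I) = w⁻¹ := by
    rw [hw, neg_mul, Complex.exp_neg]
  have hxneg : Complex.exp (-(φ : ℂ) * Complex.I) = x⁻¹ := by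
    rw [hx, neg_mul, Complex.exp_neg]
  have hu1 : u + 1 ≠ 0 := fun hh => hun (by linear_combination hh)
  have hv1' : v - 1 ≠ 0 := sub_ne_zero.mpr hv1
  have hcos : w + w⁻¹ ≠ 0 := by
    intro hh
    apply hu1
    rw [hu]
    field_simp at hh
    linear_combination hh
  have hsin : x⁻¹ - x ≠ 0 := by
    intro hh
    apply hv1'
    rw [hv]
    field_simp at hh
    linear_combination -hh
  rw [Complex.ofReal_mul, Complex.ofReal_tan, _root_.cot, Complex.ofReal_div, Complex.ofReal_cos,
    Complex.ofReal_sin, Complex.tan_eq_sin_div_cos]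
  simp only [Complex.sin, Complex.cos, hwneg, hxneg, ← hw, ← hx]
  rw [hu, hv]
  have key : ∀ a b c d : ℂ, b ≠ 0 → d ≠ 0 → Complex.I ≠ 0 →
      a * Complex.I / 2 / (b / 2) * (c / 2 / (d * Complex.I / 2)) = a * c / (b * d) := by
    intro a b c d hb hd hi
    field_simp
  rw [key _ _ _ _ hcos hsin Complex.I_ne_zero]
  rw [div_eq_div_iff (by
      intro hh
      rcases mul_eq_zero.mp hh with h1 | h1
      · exact hcos h1
      · exact hsin h1)
    (by
      intro hh
      rcases mul_eq_zero.mp hh with h1 | h1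
      · exact hu1 (by rw [hu]; linear_combination h1)
      · exact hv1' (by rw [hv]; linear_combination h1))]
  field_simp
  ring

section sumAB
variable (k : ℕ) (h : ℤ)

-- the residue (h*l) % k as a natural number
def rr (k : ℕ) (h : ℤ) (l : ℕ) : ℕ := ((h * l) % k).toNat

lemma rr_cast (hk : 0 < k) (l : ℕ) : ((rr k h l : ℤ)) = (h * l) % k := by
  have : (0:ℤ) ≤ (h * l) % k := Int.emod_nonneg _ (by exact_mod_cast hk.ne')
  simp [rr, Int.toNat_of_nonneg this]

lemma rr_lt (hk : 0 < k) (l : ℕ) : rr k h l < k := by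
  have h2 : (h * l) % k < k := Int.emod_lt_of_pos _ (by exact_mod_cast hk)
  have := rr_cast k h hk l
  omega

lemma rr_pos (hk : 0 < k) (hco : Int.gcd h k = 1) (l : ℕ) (hl : l ∈ Icc 1 (k-1)) :
    0 < rr k h l := by
  simp only [mem_Icc] at hl
  rcases Nat.eq_zero_or_pos (rr k h l) with h0 | h0
  · exfalso
    have hcast := rr_cast k h hk l
    rw [h0] at hcast
    have hdvd : (k:ℤ) ∣ h * l := Int.dvd_of_emod_eq_zero hcast.symm
    have hcop : IsCoprime (k:ℤ) h := by
      rw [Int.isCoprime_iff_gcd_eq_one, Int.gcd_comm]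
      exact hco
    have hdl : (k:ℤ) ∣ (l:ℤ) := hcop.dvd_of_dvd_mul_left hdvd
    have : k ∣ l := Int.natCast_dvd_natCast.mp hdl
    have := Nat.le_of_dvd (by omega) this
    omega
  · exact h0

lemma dvd_iff_eq (hk : 0 < k) (hco : Int.gcd h k = 1) (l : ℕ) (hl : l ∈ Icc 1 (k-1))
    (j : ℕ) (hj : j ∈ Icc 1 (k-1)) :
    (k:ℤ) ∣ (j:ℤ) + h * l ↔ j = k - rr k h l := by
  simp only [mem_Icc] at hl hj
  have hr1 := rr_pos k h hk hco l (by simp [mem_Icc]; omega)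
  have hr2 := rr_lt k h hk l
  have hdecomp : h * (l:ℤ) = k * ((h * l) / k) + rr k h l := by
    rw [rr_cast k h hk]
    exact (Int.mul_ediv_add_emod _ _).symm
  constructor
  · intro hd
    rw [hdecomp] at hd
    have hd2 : (k:ℤ) ∣ (j:ℤ) + rr k h l := by
      have : (j:ℤ) + ((k:ℤ) * ((h * l) / k) + rr k h l) - (k:ℤ) * ((h * l)/k)
          = (j:ℤ) + rr k h l := by ring
      rw [← this]
      exact dvd_sub hd (Dvd.intro _ rfl)
    rcases hd2 with ⟨c, hc⟩
    have hkpos : (0:ℤ) < k := by exact_mod_cast hk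
    have hc1 : c = 1 := by
      by_contra hne
      rcases lt_or_gt_of_ne hne with hlt | hgt
      · have h3 : c ≤ 0 := by omega
        have : (k:ℤ) * c ≤ 0 := mul_nonpos_of_nonneg_of_nonpos hkpos.le h3
        omega
      · have h3 : (2:ℤ) ≤ c := by omega
        have : (k:ℤ) * 2 ≤ (k:ℤ) * c := mul_le_mul_of_nonneg_left h3 hkpos.le
        omega
    rw [hc1, mul_one] at hc
    omega
  · intro hjeq
    rw [hdecomp]
    have hsum : (j:ℤ) + rr k h l = k := by omega
    refine ⟨(h*l)/k + 1, ?_⟩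
    linear_combination hsum

end sumAB

lemma neg_one_pow_sub {k r : ℕ} (hko : Odd k) (hr : r ≤ k) :
    (-1 : ℂ) ^ (k - r) = -(-1 : ℂ) ^ r := by
  have h2 : (-1 : ℂ) ^ (k - r) * (-1) ^ r = -1 := by
    rw [← pow_add, Nat.sub_add_cancel hr]
    exact hko.neg_one_pow
  have h3 : (-1 : ℂ) ^ r * (-1) ^ r = 1 := by
    rw [← pow_add]
    exact Even.neg_one_pow ⟨r, by ring⟩
  linear_combination ((-1:ℂ)^r) * h2 - ((-1:ℂ)^(k-r)) * h3

lemma sum_AB (k : ℕ) (hk : 0 < k) (hko : Odd k) (h : ℤ) (hco : Int.gcd h k = 1) :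
    ∑ a ∈ range k,
      ((-∑ j ∈ Icc 1 (k - 1), (-1 : ℂ) ^ j * (zt k ^ a) ^ j)
        * (1 + (2 / (k : ℂ)) * ∑ l ∈ range k, (l : ℂ) * (zt k ^ ((a : ℤ) * h)) ^ l))
      = 2 * ∑ l ∈ Icc 1 (k - 1), (l : ℂ) * (-1) ^ (rr k h l) := by
  have hzk : zt k ≠ 0 := Complex.exp_ne_zero _
  have hkc : (k : ℂ) ≠ 0 := Nat.cast_ne_zero.mpr hk.ne'
  have hp1 : ∀ a j : ℕ, (zt k ^ a) ^ j = (zt k ^ (j:ℤ)) ^ a := by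
    intro a j
    rw [← pow_mul, mul_comm a j, pow_mul, zpow_natCast]
  have hp3 : ∀ a j l : ℕ, (zt k ^ (j:ℤ)) ^ a * (zt k ^ ((a:ℤ) * h)) ^ l
      = (zt k ^ ((j:ℤ) + h * l)) ^ a := by
    intro a j l
    rw [← zpow_natCast (zt k ^ ((a:ℤ)*h)) l, ← zpow_mul, ← zpow_natCast (zt k ^ (j:ℤ)) a,
      ← zpow_mul, ← zpow_natCast (zt k ^ ((j:ℤ) + h*l)) a, ← zpow_mul,
      ← zpow_add₀ hzk]
    congr 1
    ring
  have hA : ∀ a : ℕ,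
      ((-∑ j ∈ Icc 1 (k - 1), (-1 : ℂ) ^ j * (zt k ^ a) ^ j)
        * (1 + (2 / (k : ℂ)) * ∑ l ∈ range k, (l : ℂ) * (zt k ^ ((a : ℤ) * h)) ^ l))
      = (-∑ j ∈ Icc 1 (k - 1), (-1 : ℂ) ^ j * (zt k ^ (j:ℤ)) ^ a)
        - (2 / (k : ℂ)) * ∑ j ∈ Icc 1 (k - 1), ∑ l ∈ range k,
            ((-1 : ℂ) ^ j * l * (zt k ^ ((j:ℤ) + h * l)) ^ a) := by
    intro a
    simp only [hp1]
    have hss : (∑ j ∈ Icc 1 (k - 1), (-1 : ℂ) ^ j * (zt k ^ (j:ℤ)) ^ a)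
        * (∑ l ∈ range k, (l : ℂ) * (zt k ^ ((a:ℤ) * h)) ^ l)
        = ∑ j ∈ Icc 1 (k - 1), ∑ l ∈ range k,
            ((-1 : ℂ) ^ j * l * (zt k ^ ((j:ℤ) + h * l)) ^ a) := by
      rw [Finset.sum_mul_sum]
      refine sum_congr rfl fun j _ => sum_congr rfl fun l _ => ?_
      rw [← hp3 a j l]
      ring
    linear_combination (-(2/(k:ℂ))) * hss
  rw [Finset.sum_congr rfl fun a _ => hA a]
  rw [Finset.sum_sub_distrib]
  have hT1 : ∑ a ∈ range k, (-∑ j ∈ Icc 1 (k - 1), (-1 : ℂ) ^ j * (zt k ^ (j:ℤ)) ^ a) = 0 := by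
    rw [Finset.sum_neg_distrib, Finset.sum_comm, neg_eq_zero]
    apply Finset.sum_eq_zero
    intro j hj
    rw [← Finset.mul_sum, orth k hk (j:ℤ)]
    rw [if_neg, mul_zero]
    intro hd
    have hd2 : k ∣ j := Int.natCast_dvd_natCast.mp hd
    simp only [mem_Icc] at hj
    have := Nat.le_of_dvd (by omega) hd2
    omega
  rw [hT1, ← Finset.mul_sum]
  have hT2 : ∑ a ∈ range k, ∑ j ∈ Icc 1 (k - 1), ∑ l ∈ range k,
      ((-1 : ℂ) ^ j * l * (zt k ^ ((j:ℤ) + h * l)) ^ a)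
      = ∑ l ∈ Icc 1 (k - 1), (-(-1:ℂ) ^ (rr k h l)) * l * k := by
    rw [Finset.sum_comm]
    have step1 : ∀ j ∈ Icc 1 (k-1), ∑ a ∈ range k, ∑ l ∈ range k,
        ((-1 : ℂ) ^ j * l * (zt k ^ ((j:ℤ) + h * l)) ^ a)
        = ∑ l ∈ range k, ((-1:ℂ)^j * l * (if (k:ℤ) ∣ ((j:ℤ) + h*l) then (k:ℂ) else 0)) := by
      intro j _
      rw [Finset.sum_comm]
      refine sum_congr rfl fun l _ => ?_
      rw [← Finset.mul_sum, orth k hk]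
    rw [Finset.sum_congr rfl step1, Finset.sum_comm]
    rw [range_eq_insert hk, Finset.sum_insert (by simp)]
    have hzero : ∑ j ∈ Icc 1 (k - 1),
        ((-1:ℂ)^j * ((0:ℕ):ℂ) * (if (k:ℤ) ∣ ((j:ℤ) + h*((0:ℕ):ℤ)) then (k:ℂ) else 0)) = 0 :=
      Finset.sum_eq_zero fun j _ => by simp
    rw [hzero, zero_add]
    refine sum_congr rfl fun l hl => ?_
    rw [Finset.sum_eq_single (k - rr k h l)]
    · rw [if_pos ((dvd_iff_eq k h hk hco l hl (k - rr k h l) (by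
        have h1 := rr_pos k h hk hco l hl
        have h2 := rr_lt k h hk l
        simp only [mem_Icc]; omega)).mpr rfl)]
      rw [neg_one_pow_sub hko (by have := rr_lt k h hk l; omega)]
    · intro j hj hne
      rw [if_neg, mul_zero]
      intro hd
      exact hne ((dvd_iff_eq k h hk hco l hl j hj).mp hd)
    · intro hnotmem
      exfalso
      apply hnotmem
      have h1 := rr_pos k h hk hco l hl
      have h2 := rr_lt k h hk l
      simp only [mem_Icc]; omega
  rw [hT2, Finset.mul_sum, Finset.mul_sum, zero_sub, ← Finset.sum_neg_distrib]
  refine sum_congr rfl fun l hl => ?_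
  field_simp

lemma neg_one_pow_sub_real {k r : ℕ} (hko : Odd k) (hr : r ≤ k) :
    (-1 : ℝ) ^ (k - r) = -(-1 : ℝ) ^ r := by
  have h2 : (-1 : ℝ) ^ (k - r) * (-1) ^ r = -1 := by
    rw [← pow_add, Nat.sub_add_cancel hr]
    exact hko.neg_one_pow
  have h3 : (-1 : ℝ) ^ r * (-1) ^ r = 1 := by
    rw [← pow_add]
    exact Even.neg_one_pow ⟨r, by ring⟩
  linear_combination ((-1:ℝ)^r) * h2 - ((-1:ℝ)^(k-r)) * h3

lemma saw_val (k a : ℕ) (h1 : 1 ≤ a) (h2 : a < k) :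
    saw ((a:ℝ)/k) = (a:ℝ)/k - 1/2 := by
  have hk0 : (0:ℝ) < k := by
    have : 0 < k := by omega
    exact_mod_cast this
  have hlt : (a:ℝ)/k < 1 := by
    rw [div_lt_one hk0]
    exact_mod_cast h2
  have hpos : 0 < (a:ℝ)/k := by
    apply div_pos _ hk0
    exact_mod_cast h1
  rw [saw, if_neg, Int.fract_eq_self.mpr ⟨hpos.le, hlt⟩]
  rintro ⟨m, hm⟩
  have h0 : (0:ℝ) < (m:ℝ) := hm ▸ hpos
  have h1' : (m:ℝ) < 1 := hm ▸ hlt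
  have e0 : 0 < m := by exact_mod_cast h0
  have e1 : m < 1 := by exact_mod_cast h1'
  omega

lemma pow_floor_eq (k : ℕ) (hk : 0 < k) (hko : Odd k) (h : ℤ) (hhe : Even h) (a : ℕ) :
    (-1:ℝ) ^ (⌊(a:ℝ) * (h:ℝ) / k⌋) = (-1:ℝ) ^ (rr k h a) := by
  have hfloor : ⌊(a:ℝ) * (h:ℝ) / k⌋ = ((a:ℤ) * h) / k := by
    have hcast : (a:ℝ) * (h:ℝ) / (k:ℝ) = (((((a:ℤ)*h : ℤ) : ℚ) / ((k:ℕ) : ℚ) : ℚ) : ℝ) := by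
      push_cast; ring
    rw [hcast, Rat.floor_cast, Rat.floor_intCast_div_natCast]
  rw [hfloor]
  set m := (a:ℤ) * h with hm
  obtain ⟨s, hs⟩ : Even m := hhe.mul_left _
  obtain ⟨t, ht⟩ := hko
  have hdm : (k:ℤ) * (m / k) + m % k = m := Int.mul_ediv_add_emod m k
  have hmm : ((rr k h a : ℤ)) = m % k := by
    rw [rr_cast k h hk a, hm, mul_comm]
  have key : m / k - (rr k h a : ℤ) = 2 * ((t+1)*(m/k) - s) := by
    have htz : (k:ℤ) = 2*t + 1 := by exact_mod_cast ht
    linear_combination -hdm - hs + (m/k) * htz - hmm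
  have heq : Even (m / k - (rr k h a : ℤ)) := ⟨(t+1)*(m/k) - s, by linarith [key]⟩
  have h2 : m/k = (rr k h a : ℤ) + (m/k - rr k h a) := by ring
  rw [h2, zpow_add₀ (by norm_num : (-1:ℝ) ≠ 0), heq.neg_one_zpow, mul_one, zpow_natCast]

lemma rr_flip (k : ℕ) (hk : 0 < k) (hco : Int.gcd h k = 1) (a : ℕ) (ha : a ∈ Icc 1 (k-1)) :
    rr k h (k - a) = k - rr k h a := by
  simp only [mem_Icc] at ha
  have h1 := rr_pos k h hk hco a (by simp [mem_Icc]; omega)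
  have h2 := rr_lt k h hk a
  have hca : ((k - a : ℕ) : ℤ) = (k:ℤ) - a := by
    have : a ≤ k := by omega
    push_cast [this]; ring
  have hdm := Int.mul_ediv_add_emod (h * (a:ℤ)) (k:ℤ)
  have hsplit : h * (((k-a:ℕ)):ℤ) = (k:ℤ) * (h - (h * a)/k - 1) + ((k:ℤ) - (h*a) % k) := by
    rw [hca]
    linear_combination hdm
  have hrc := rr_cast k h hk a
  have hr1 : (h * ((k-a:ℕ)):ℤ) % k = (k:ℤ) - (h*a) % k := by
    rw [hsplit, add_comm, Int.add_mul_emod_self_left]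
    apply Int.emod_eq_of_lt <;> omega
  have : ((rr k h (k-a) : ℤ)) = (k:ℤ) - (h*a) % k := by
    rw [rr_cast k h hk (k-a), hr1]
  omega

lemma sign_sum_zero (k : ℕ) (hk : 0 < k) (hko : Odd k) (h : ℤ) (hco : Int.gcd h k = 1) :
    ∑ a ∈ Icc 1 (k-1), (-1:ℝ)^(rr k h a) = 0 := by
  apply Finset.sum_involution (fun a _ => k - a)
  · intro a ha
    rw [rr_flip k hk hco a ha, neg_one_pow_sub_real hko (le_of_lt (rr_lt k h hk a))]
    ring
  · intro a ha _
    simp only [mem_Icc] at ha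
    obtain ⟨t, ht⟩ := hko
    omega
  · intro a ha
    simp only [mem_Icc] at ha ⊢
    omega
  · intro a ha
    simp only [mem_Icc] at ha
    omega

lemma rhs_term (k : ℕ) (hk : 0 < k) (hko : Odd k) (h : ℤ) (hco : Int.gcd h k = 1)
    (a : ℕ) (ha : a ∈ Icc 1 (k-1)) :
    ((Real.tan (Real.pi * a / k) * _root_.cot (Real.pi * a * (h:ℝ) / k) : ℝ) : ℂ)
      = (-∑ j ∈ Icc 1 (k - 1), (-1 : ℂ) ^ j * (zt k ^ a) ^ j)
        * (1 + (2 / (k : ℂ)) * ∑ l ∈ range k, (l : ℂ) * (zt k ^ ((a : ℤ) * h)) ^ l) := by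
  simp only [mem_Icc] at ha
  have hprim := zt_prim k hk
  set u := zt k ^ a with hu
  set v := zt k ^ ((a:ℤ) * h) with hv
  have hzk1 : zt k ^ (k:ℕ) = 1 := by
    have := zt_pow_k k hk
    rwa [zpow_natCast] at this
  have huk : u ^ k = 1 := by
    rw [hu, ← pow_mul, mul_comm, pow_mul, hzk1, one_pow]
  have hvk : v ^ k = 1 := by
    rw [hv, ← zpow_natCast (zt k ^ ((a:ℤ) * h)) k, ← zpow_mul, mul_comm, zpow_mul,
      zt_pow_k k hk, one_zpow]
  have hun : u ≠ -1 := by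
    intro hcon
    have h2 : zt k ^ (a * 2) = 1 := by
      rw [pow_mul, ← hu, hcon]
      norm_num
    have hdvd : k ∣ a * 2 := (hprim.pow_eq_one_iff_dvd _).mp h2
    have hcop2 : Nat.Coprime k 2 := hko.coprime_two_right
    have : k ∣ a := Nat.Coprime.dvd_of_dvd_mul_right hcop2 hdvd
    have := Nat.le_of_dvd (by omega) this
    omega
  have hv1 : v ≠ 1 := by
    intro hcon
    have hdvd : (k:ℤ) ∣ (a:ℤ) * h := (zt_zpow_eq_one_iff k hk _).mp (by rw [← hv]; exact hcon)
    have hcop : IsCoprime (k:ℤ) h := by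
      rw [Int.isCoprime_iff_gcd_eq_one, Int.gcd_comm]
      exact hco
    have hdl : (k:ℤ) ∣ (a:ℤ) := hcop.dvd_of_dvd_mul_right hdvd
    have : k ∣ a := Int.natCast_dvd_natCast.mp hdl
    have := Nat.le_of_dvd (by omega) this
    omega
  have hu2 : u = (Complex.exp ((Real.pi * a / k : ℝ) * Complex.I)) ^ 2 := by
    rw [hu]
    unfold zt
    rw [← Complex.exp_nat_mul, ← Complex.exp_nat_mul]
    congr 1
    push_cast
    ring
  have hv2 : v = (Complex.exp ((Real.pi * a * (h:ℝ) / k : ℝ) * Complex.I)) ^ 2 := by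
    rw [hv]
    unfold zt
    rw [← Complex.exp_int_mul, ← Complex.exp_nat_mul]
    congr 1
    push_cast
    ring
  have htrig := trig_eq (Real.pi * a / k) (Real.pi * a * (h:ℝ) / k) u v
      (Complex.exp ((Real.pi * a / k : ℝ) * Complex.I))
      (Complex.exp ((Real.pi * a * (h:ℝ) / k : ℝ) * Complex.I)) rfl rfl hu2 hv2 hun hv1
  rw [htrig]
  exact frac_eq hk hko u v huk hvk hun hv1

theorem hardy_s1 (k : ℕ) (hk : 0 < k) (hko : Odd k) (h : ℤ) (hhe : Even h)
    (hco : Int.gcd h k = 1) :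
    ∑ a ∈ Finset.range k, (-1 : ℝ) ^ (⌊(a : ℝ) * (h : ℝ) / k⌋) * saw ((a : ℝ) / k)
      = 1 / (2 * k) *
          ∑ a ∈ Finset.Icc 1 (k - 1),
            Real.tan (Real.pi * a / k) * cot (Real.pi * a * (h : ℝ) / k) := by
  have hkr : (k:ℝ) ≠ 0 := Nat.cast_ne_zero.mpr hk.ne'
  have hL : ∑ a ∈ range k, (-1 : ℝ) ^ (⌊(a : ℝ) * (h : ℝ) / k⌋) * saw ((a : ℝ) / k)
      = ∑ a ∈ Icc 1 (k-1), (-1:ℝ)^(rr k h a) * ((a:ℝ)/k - 1/2) := by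
    rw [range_eq_insert hk, Finset.sum_insert (by simp)]
    have h0 : saw (((0:ℕ):ℝ)/k) = 0 := by
      rw [saw, if_pos ⟨0, by simp⟩]
    rw [h0, mul_zero, zero_add]
    refine sum_congr rfl fun a ha => ?_
    simp only [mem_Icc] at ha
    rw [pow_floor_eq k hk hko h hhe a, saw_val k a ha.1 (by omega)]
  have hR : ∑ a ∈ Icc 1 (k-1), Real.tan (Real.pi * a / k) * _root_.cot (Real.pi * a * (h:ℝ) / k)
      = 2 * ∑ l ∈ Icc 1 (k-1), (l:ℝ) * (-1:ℝ)^(rr k h l) := by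
    apply Complex.ofReal_injective
    rw [Complex.ofReal_sum]
    have e1 : ∑ a ∈ Icc 1 (k-1),
        ((Real.tan (Real.pi * a / k) * _root_.cot (Real.pi * a * (h:ℝ) / k) : ℝ) : ℂ)
        = ∑ a ∈ Icc 1 (k-1),
          ((-∑ j ∈ Icc 1 (k - 1), (-1 : ℂ) ^ j * (zt k ^ a) ^ j)
            * (1 + (2 / (k : ℂ)) * ∑ l ∈ range k, (l : ℂ) * (zt k ^ ((a : ℤ) * h)) ^ l)) := by
      refine sum_congr rfl fun a ha => ?_
      exact rhs_term k hk hko h hco a ha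
    rw [e1]
    have hIccsum : ∑ j ∈ Icc 1 (k-1), (-1:ℂ)^j = 0 := by
      have hsr : ∑ j ∈ range k, (-1:ℂ)^j = 1 := by
        rw [geom_sum_eq (by norm_num : (-1:ℂ) ≠ 1), hko.neg_one_pow]
        norm_num
      rw [range_eq_insert hk, Finset.sum_insert (by simp)] at hsr
      simpa using hsr
    have hext : ∑ a ∈ Icc 1 (k-1),
        ((-∑ j ∈ Icc 1 (k - 1), (-1 : ℂ) ^ j * (zt k ^ a) ^ j)
          * (1 + (2 / (k : ℂ)) * ∑ l ∈ range k, (l : ℂ) * (zt k ^ ((a : ℤ) * h)) ^ l))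
        = ∑ a ∈ range k,
        ((-∑ j ∈ Icc 1 (k - 1), (-1 : ℂ) ^ j * (zt k ^ a) ^ j)
          * (1 + (2 / (k : ℂ)) * ∑ l ∈ range k, (l : ℂ) * (zt k ^ ((a : ℤ) * h)) ^ l)) := by
      refine Finset.sum_subset ?_ ?_
      · intro x hx
        simp only [mem_Icc] at hx
        simp only [mem_range]
        omega
      · intro x hx hnx
        have hx0 : x = 0 := by
          simp only [mem_range] at hx
          simp only [mem_Icc, not_and, not_le] at hnx
          omega
        subst hx0
        have hz0 : -∑ j ∈ Icc 1 (k - 1), (-1 : ℂ) ^ j * (zt k ^ (0:ℕ)) ^ j = 0 := by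
          simp [hIccsum]
        rw [hz0, zero_mul]
    rw [hext, sum_AB k hk hko h hco]
    rw [Complex.ofReal_mul, Complex.ofReal_ofNat, Complex.ofReal_sum]
    congr 1
    refine sum_congr rfl fun l _ => ?_
    push_cast
    ring
  rw [hL, hR]
  have hz := sign_sum_zero k hk hko h hco
  have expand : ∀ a : ℕ, (-1:ℝ)^(rr k h a) * ((a:ℝ)/k - 1/2)
      = 1/(2*(k:ℝ)) * (2 * ((a:ℝ) * (-1:ℝ)^(rr k h a))) - (1/2) * (-1:ℝ)^(rr k h a) := by
    intro a
    field_simp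
  have hB : ∑ x ∈ Icc 1 (k-1), (1/2) * (-1:ℝ)^(rr k h x) = 0 := by
    rw [← Finset.mul_sum, hz, mul_zero]
  have hA : ∑ x ∈ Icc 1 (k-1), (1/(2*(k:ℝ)) * (2 * ((x:ℝ) * (-1:ℝ)^(rr k h x))))
      = 1/(2*(k:ℝ)) * (2 * ∑ l ∈ Icc 1 (k-1), (l:ℝ) * (-1:ℝ)^(rr k h l)) := by
    rw [Finset.mul_sum, Finset.mul_sum]
  rw [sum_congr rfl fun a _ => expand a, Finset.sum_sub_distrib, hA, hB, sub_zero]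

end HardyAux
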